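/- For e ≥ 0, define integers H_e(i,j,k) by (X+Y+Z)^e = ∑_{i,j,k} H_e(i,j,k) X^iY^jZ^k. Let w ≥ 0 and n₁, n₂ be integers with w ≤ n₁+n₂ ≤ 2w and 0 ≤ n₂ ≤ w. Then ∑_{b∈Z} (−1)^b · H_w(b+n₁+n₂−w, −b, 2w−n₁−n₂) · H_w(−(b+n₁+n₂−w), b+n₁, n₂) = (−1)^{w−n₁−n₂} · binom(w, n₁+n₂−w) · binom(w, w−n₂). -/

import Mathlib

open MvPolynomial

/-- `H e i j k` is the coefficient of `X^i Y^j Z^k` in `(X + Y + Z)^e`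
(zero if any index is negative). -/
noncomputable def Htri (e : ℕ) (i j k : ℤ) : ℤ :=
  if 0 ≤ i ∧ 0 ≤ j ∧ 0 ≤ k then
    coeff (Finsupp.single (0 : Fin 3) i.toNat + Finsupp.single (1 : Fin 3) j.toNat +
        Finsupp.single (2 : Fin 3) k.toNat)
      ((X 0 + X 1 + X 2 : MvPolynomial (Fin 3) ℤ) ^ e)
  else 0

/-!
The two factors of each summand have opposite first indices, and `H` vanishes at negative
indices, so only the term `b = w - n₁ - n₂` survives. There both first indices are `0`, and
`H_e(0, j, k) = binom(e, j)`.
-/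

lemma Htri_natCast (a b c : ℕ) :
    Htri (a + b + c) a b c = Nat.multinomial Finset.univ ![a, b, c] := by
  set d : Fin 3 →₀ ℕ := Finsupp.single 0 a + Finsupp.single 1 b + Finsupp.single 2 c
  have hd : ∀ i, d i = ![a, b, c] i := by
    intro i; fin_cases i <;> simp [d]
  have hsum : d.sum (fun _ m ↦ m) = a + b + c := by
    simp [Finsupp.sum_fintype, Fin.sum_univ_three, hd]
  have hmult : d.multinomial = Nat.multinomial Finset.univ ![a, b, c] := by
    rw [Finsupp.multinomial_eq_of_support_subset (Finset.subset_univ _)]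
    exact Nat.multinomial_congr fun i _ ↦ hd i
  rw [Htri, if_pos ⟨by positivity, by positivity, by positivity⟩]
  simp only [Int.toNat_natCast]
  rw [← Fin.sum_univ_three, coeff_sum_X_pow_of_fintype, if_pos hsum, hmult]

lemma Htri_zero_natCast (b c : ℕ) : Htri (b + c) 0 b c = (b + c).choose b := by
  have h := Htri_natCast 0 b c
  rw [zero_add, Nat.cast_zero] at h
  rw [h, Nat.multinomial_univ_three, Nat.choose_eq_factorial_div_factorial (by omega)]
  simp

lemma Htri_of_neg_left (e : ℕ) {i : ℤ} (hi : i < 0) (j k : ℤ) : Htri e i j k = 0 :=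
  if_neg fun h ↦ hi.not_ge h.1

lemma Htri_mul_Htri_neg_eq_zero (e e' : ℕ) {i : ℤ} (hi : i ≠ 0) (j k j' k' : ℤ) :
    Htri e i j k * Htri e' (-i) j' k' = 0 := by
  rcases hi.lt_or_gt with hneg | hpos
  · rw [Htri_of_neg_left e hneg, zero_mul]
  · rw [Htri_of_neg_left e' (neg_neg_of_pos hpos), mul_zero]

/-- For `w ≤ n₁ + n₂ ≤ 2w` and `0 ≤ n₂ ≤ w`,
`∑_{b∈ℤ} (−1)^b H_w(b+n₁+n₂−w, −b, 2w−n₁−n₂) · H_w(−(b+n₁+n₂−w), b+n₁, n₂)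
 = (−1)^{w−n₁−n₂} C(w, n₁+n₂−w) C(w, w−n₂)`.
(The sum over `b ∈ ℤ` is finite: all terms with `b ∉ [−w, w]` vanish.) -/
theorem Htri_sum_identity (w n₁ n₂ : ℕ) (h1 : w ≤ n₁ + n₂) (h2 : n₁ + n₂ ≤ 2 * w)
    (h3 : n₂ ≤ w) :
    ∑ b ∈ Finset.Icc (-(w : ℤ)) (w : ℤ),
        ((-1 : ℚ) ^ b) *
          (Htri w (b + (n₁ : ℤ) + (n₂ : ℤ) - (w : ℤ)) (-b)
              (2 * (w : ℤ) - (n₁ : ℤ) - (n₂ : ℤ)) : ℚ) *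
          (Htri w (-(b + (n₁ : ℤ) + (n₂ : ℤ) - (w : ℤ))) (b + (n₁ : ℤ)) (n₂ : ℤ) : ℚ)
      = ((-1 : ℚ) ^ ((w : ℤ) - (n₁ : ℤ) - (n₂ : ℤ))) *
          (w.choose (n₁ + n₂ - w) : ℚ) * (w.choose (w - n₂) : ℚ) := by
  set b₀ : ℤ := (w : ℤ) - n₁ - n₂
  rw [Finset.sum_eq_single b₀]
  · have hfirst : Htri w (b₀ + n₁ + n₂ - w) (-b₀) (2 * (w : ℤ) - n₁ - n₂)
        = w.choose (n₁ + n₂ - w) := by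
      have h := Htri_zero_natCast (n₁ + n₂ - w) (2 * w - (n₁ + n₂))
      rw [show n₁ + n₂ - w + (2 * w - (n₁ + n₂)) = w by omega] at h
      convert h using 2 <;> omega
    have hsecond : Htri w (-(b₀ + n₁ + n₂ - w)) (b₀ + n₁) n₂ = w.choose (w - n₂) := by
      have h := Htri_zero_natCast (w - n₂) n₂
      rw [Nat.sub_add_cancel h3] at h
      convert h using 2 <;> omega
    rw [hfirst, hsecond, Int.cast_natCast, Int.cast_natCast]
  · intro b _ hb
    rw [mul_assoc, ← Int.cast_mul, Htri_mul_Htri_neg_eq_zero w w (by omega), Int.cast_zero,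
      mul_zero]
  · intro hb₀
    exact absurd (Finset.mem_Icc.mpr ⟨by omega, by omega⟩) hb₀
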